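/- Let H > 1 and 2HK ≤ 1 with K > 0, and let R_{H,K}(s,t) = 2^{−K}((t^{2H} + s^{2H})^K − |t−s|^{2HK}). Then for all s,t ≥ 0, the incremental variance V(s,t) := R_{H,K}(t,t) + R_{H,K}(s,s) − 2R_{H,K}(s,t) satisfies the quasihelix bounds 2^{−K}·|t−s|^{2HK} ≤ V(s,t) ≤ 2^{1−K}·|t−s|^{2HK}. -/

import Mathlib

/-- The bifractional Brownian motion covariance kernel. -/
noncomputable def Rbif (H K s t : ℝ) : ℝ :=
  (2 : ℝ) ^ (-K) * ((t ^ (2 * H) + s ^ (2 * H)) ^ K - |t - s| ^ (2 * H * K))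

/-!
Write `p = 2H`, `α = pK` and `M(a, b) = (a ^ p + b ^ p) / 2`. For `s, t ≥ 0` the incremental
variance is `V = t ^ α + s ^ α - 2 M(t, s) ^ K + 2 ^ (1 - K) |t - s| ^ α`. The upper bound is the
power-mean inequality `M_K ≤ M_1` applied to `t ^ p, s ^ p`. The lower bound holds even in the
stronger form `|t - s| ^ α ≤ V`: for fixed `v ≥ 0` the map
`x ↦ (x + v) ^ α + x ^ α - 2 M(x + v, x) ^ K` is nondecreasing on `[0, ∞)`, because the sign of its
derivative reduces to `M_{p-1} ≤ M_p`, `M_1 ≤ M_p` and the convexity of `y ↦ y ^ (α - 1)`.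
Comparing its values at `0` and at `min s t` gives the bound.
-/

open Real Set

lemma rpow_add_div_two_le_of_nonpos {c a b : ℝ} (hc : c ≤ 0) (ha : 0 < a) (hb : 0 < b) :
    ((a + b) / 2) ^ c ≤ (a ^ c + b ^ c) / 2 := by
  have amgm {x y : ℝ} (hx : 0 ≤ x) (hy : 0 ≤ y) :
      x ^ (1 / 2 : ℝ) * y ^ (1 / 2 : ℝ) ≤ (x + y) / 2 := by
    have := geom_mean_le_arith_mean2_weighted (by norm_num) (by norm_num) hx hy (add_halves 1)
    linarith
  calc ((a + b) / 2) ^ c ≤ (a ^ (1 / 2 : ℝ) * b ^ (1 / 2 : ℝ)) ^ c :=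
        rpow_le_rpow_of_nonpos (by positivity) (amgm ha.le hb.le) hc
    _ = (a ^ c) ^ (1 / 2 : ℝ) * (b ^ c) ^ (1 / 2 : ℝ) := by
        rw [mul_rpow (by positivity) (by positivity), ← rpow_mul ha.le, ← rpow_mul hb.le,
          ← rpow_mul ha.le, ← rpow_mul hb.le, mul_comm c]
    _ ≤ (a ^ c + b ^ c) / 2 := amgm (by positivity) (by positivity)

/-- Monotonicity of two-point power means `M_q ≤ M_r`, in the form `M_q ^ q ≤ M_r ^ q`. -/
lemma add_rpow_div_two_le_rpow {q r a b : ℝ} (hq : 0 < q) (hqr : q ≤ r) (ha : 0 ≤ a)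
    (hb : 0 ≤ b) : (a ^ q + b ^ q) / 2 ≤ ((a ^ r + b ^ r) / 2) ^ (q / r) := by
  have hr : 0 < r := hq.trans_le hqr
  have hconv := (convexOn_rpow (p := r / q) (by rw [le_div_iff₀ hq]; linarith)).2
    (mem_Ici.2 (rpow_nonneg ha q)) (mem_Ici.2 (rpow_nonneg hb q))
    (by norm_num : (0 : ℝ) ≤ 1 / 2) (by norm_num : (0 : ℝ) ≤ 1 / 2) (add_halves 1)
  simp only [smul_eq_mul, ← rpow_mul ha, ← rpow_mul hb, mul_div_cancel₀ _ hq.ne'] at hconv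
  have hmid : ((a ^ q + b ^ q) / 2) ^ (r / q) ≤ (a ^ r + b ^ r) / 2 := by
    rw [show (a ^ q + b ^ q) / 2 = 1 / 2 * a ^ q + 1 / 2 * b ^ q by ring]
    linarith
  calc (a ^ q + b ^ q) / 2 = (((a ^ q + b ^ q) / 2) ^ (r / q)) ^ (q / r) := by
        rw [← rpow_mul (by positivity), show r / q * (q / r) = 1 by field_simp, rpow_one]
    _ ≤ ((a ^ r + b ^ r) / 2) ^ (q / r) := by gcongr

lemma mean_rpow_mul_add_rpow_le {p K a b : ℝ} (hp : 1 < p) (hpK : p * K ≤ 1) (ha : 0 < a)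
    (hb : 0 < b) :
    ((a ^ p + b ^ p) / 2) ^ (K - 1) * (a ^ (p - 1) + b ^ (p - 1))
      ≤ a ^ (p * K - 1) + b ^ (p * K - 1) := by
  set M := (a ^ p + b ^ p) / 2
  have hM : 0 < M := by positivity
  have hM_sub_one : (a ^ (p - 1) + b ^ (p - 1)) / 2 ≤ M ^ ((p - 1) / p) :=
    add_rpow_div_two_le_rpow (by linarith) (by linarith) ha.le hb.le
  have hM_one : (a + b) / 2 ≤ M ^ (1 / p) := by
    simpa only [rpow_one] using add_rpow_div_two_le_rpow one_pos hp.le ha.le hb.le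
  have hM_neg : M ^ ((p * K - 1) / p) ≤ ((a + b) / 2) ^ (p * K - 1) := by
    calc M ^ ((p * K - 1) / p) = (M ^ (1 / p)) ^ (p * K - 1) := by
          rw [← rpow_mul hM.le, one_div_mul_eq_div]
      _ ≤ ((a + b) / 2) ^ (p * K - 1) :=
          rpow_le_rpow_of_nonpos (by positivity) hM_one (by linarith)
  have hmid := rpow_add_div_two_le_of_nonpos (c := p * K - 1) (by linarith) ha hb
  calc M ^ (K - 1) * (a ^ (p - 1) + b ^ (p - 1)) ≤ M ^ (K - 1) * (2 * M ^ ((p - 1) / p)) := by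
        gcongr
        linarith
    _ = 2 * M ^ ((p * K - 1) / p) := by
        rw [mul_left_comm, ← rpow_add hM]
        congr 2
        field_simp
        ring
    _ ≤ a ^ (p * K - 1) + b ^ (p * K - 1) := by linarith

lemma hasDerivAt_two_mul_mean_rpow {p K v x : ℝ} (hv : 0 ≤ v) (hx : 0 < x) :
    HasDerivAt (fun y ↦ 2 * (((y + v) ^ p + y ^ p) / 2) ^ K)
      (p * K * ((((x + v) ^ p + x ^ p) / 2) ^ (K - 1) * ((x + v) ^ (p - 1) + x ^ (p - 1)))) x := by
  have hxv : 0 < x + v := by linarith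
  have hshift : HasDerivAt (fun y ↦ (y + v) ^ p) (p * (x + v) ^ (p - 1)) x := by
    simpa using ((hasDerivAt_id' x).add_const v).rpow_const (p := p) (Or.inl hxv.ne')
  have hmean : HasDerivAt (fun y ↦ ((y + v) ^ p + y ^ p) / 2)
      ((p * (x + v) ^ (p - 1) + p * x ^ (p - 1)) / 2) x :=
    (hshift.add (hasDerivAt_rpow_const (p := p) (Or.inl hx.ne'))).div_const 2
  exact ((hmean.rpow_const (p := K) (Or.inl (by positivity))).const_mul 2).congr_deriv (by ring)

lemma monotoneOn_rpow_add_sub_mean {p K v : ℝ} (hp : 1 < p) (hK : 0 < K) (hpK : p * K ≤ 1)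
    (hv : 0 ≤ v) :
    MonotoneOn (fun x ↦ (x + v) ^ (p * K) + x ^ (p * K) - 2 * (((x + v) ^ p + x ^ p) / 2) ^ K)
      (Ici 0) := by
  have hpK0 : 0 < p * K := by nlinarith
  refine monotoneOn_of_hasDerivWithinAt_nonneg (convex_Ici 0) ?_ (fun x hx ↦ ?_) (fun x hx ↦ ?_)
    (f' := fun x ↦ p * K * ((x + v) ^ (p * K - 1) + x ^ (p * K - 1)) -
      p * K * ((((x + v) ^ p + x ^ p) / 2) ^ (K - 1) * ((x + v) ^ (p - 1) + x ^ (p - 1))))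
  · fun_prop (disch := positivity)
  all_goals
    rw [interior_Ici] at hx
    have hxv : 0 < x + v := by linarith [mem_Ioi.1 hx]
  · have hshift : HasDerivAt (fun y ↦ (y + v) ^ (p * K)) (p * K * (x + v) ^ (p * K - 1)) x := by
      simpa using ((hasDerivAt_id' x).add_const v).rpow_const (p := p * K) (Or.inl hxv.ne')
    refine HasDerivAt.hasDerivWithinAt ?_
    exact ((hshift.add (hasDerivAt_rpow_const (p := p * K) (Or.inl (ne_of_gt hx)))).sub
      (hasDerivAt_two_mul_mean_rpow hv hx)).congr_deriv (by ring)
  · rw [← mul_sub]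
    exact mul_nonneg hpK0.le (sub_nonneg.2 (mean_rpow_mul_add_rpow_le hp hpK hxv hx))

lemma abs_sub_rpow_le {p K s t : ℝ} (hp : 1 < p) (hK : 0 < K) (hpK : p * K ≤ 1) (hs : 0 ≤ s)
    (ht : 0 ≤ t) :
    |t - s| ^ (p * K) ≤ t ^ (p * K) + s ^ (p * K) - 2 * ((t ^ p + s ^ p) / 2) ^ K
      + 2 ^ (1 - K) * |t - s| ^ (p * K) := by
  wlog hst : s ≤ t generalizing s t
  · have := this ht hs (le_of_not_ge hst)
    rw [abs_sub_comm, add_comm (t ^ p)]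
    linarith
  have hv : 0 ≤ t - s := sub_nonneg.2 hst
  have hmono := monotoneOn_rpow_add_sub_mean hp hK hpK hv self_mem_Ici (mem_Ici.2 hs) hs
  have hp0 : p ≠ 0 := by positivity
  have hpK0 : p * K ≠ 0 := by positivity
  simp only [zero_add, add_sub_cancel, zero_rpow hp0, zero_rpow hpK0, add_zero] at hmono
  have hend : 2 * ((t - s) ^ p / 2) ^ K = 2 ^ (1 - K) * (t - s) ^ (p * K) := by
    rw [div_rpow (by positivity) zero_le_two, ← rpow_mul hv, rpow_sub two_pos, rpow_one]
    ring
  rw [abs_of_nonneg hv]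
  linarith

lemma Rbif_eq {H K s t : ℝ} (hs : 0 ≤ s) (ht : 0 ≤ t) :
    Rbif H K s t = ((t ^ (2 * H) + s ^ (2 * H)) / 2) ^ K - 2 ^ (-K) * |t - s| ^ (2 * H * K) := by
  rw [Rbif, div_rpow (by positivity) zero_le_two, rpow_neg zero_le_two]
  ring

lemma Rbif_self {H K u : ℝ} (hHK : 2 * H * K ≠ 0) (hu : 0 ≤ u) :
    Rbif H K u u = u ^ (2 * H * K) := by
  rw [Rbif_eq hu hu, sub_self, abs_zero, zero_rpow hHK, mul_zero, sub_zero, add_self_div_two,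
    ← rpow_mul hu]

/-- Quasihelix bounds for the incremental variance of bifractional Brownian
motion with `H > 1`, `0 < K`, `2HK ≤ 1`:
`2^{−K} |t−s|^{2HK} ≤ V(s,t) ≤ 2^{1−K} |t−s|^{2HK}` where
`V(s,t) = R(t,t) + R(s,s) − 2R(s,t)`. -/
theorem Rbif_quasihelix (H K : ℝ) (hH : 1 < H) (hK : 0 < K) (hHK : 2 * H * K ≤ 1)
    (s t : ℝ) (hs : 0 ≤ s) (ht : 0 ≤ t) :
    (2 : ℝ) ^ (-K) * |t - s| ^ (2 * H * K) ≤
        Rbif H K t t + Rbif H K s s - 2 * Rbif H K s t ∧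
      Rbif H K t t + Rbif H K s s - 2 * Rbif H K s t ≤
        (2 : ℝ) ^ (1 - K) * |t - s| ^ (2 * H * K) := by
  have hp : 1 < 2 * H := by linarith
  have hα : 2 * H * K ≠ 0 := by positivity
  have hV : Rbif H K t t + Rbif H K s s - 2 * Rbif H K s t =
      t ^ (2 * H * K) + s ^ (2 * H * K) - 2 * ((t ^ (2 * H) + s ^ (2 * H)) / 2) ^ K
        + 2 ^ (1 - K) * |t - s| ^ (2 * H * K) := by
    rw [Rbif_self hα ht, Rbif_self hα hs, Rbif_eq hs ht, rpow_sub two_pos, rpow_neg zero_le_two,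
      rpow_one]
    ring
  have hmean : (t ^ (2 * H * K) + s ^ (2 * H * K)) / 2 ≤ ((t ^ (2 * H) + s ^ (2 * H)) / 2) ^ K := by
    simpa only [rpow_mul ht, rpow_mul hs, rpow_one, div_one] using add_rpow_div_two_le_rpow
      (r := 1) hK (by nlinarith) (rpow_nonneg ht (2 * H)) (rpow_nonneg hs (2 * H))
  have hlower := abs_sub_rpow_le hp hK hHK hs ht
  have htwo : (2 : ℝ) ^ (-K) ≤ 1 := rpow_le_one_of_one_le_of_nonpos one_le_two (by linarith)
  rw [hV]
  constructor
  · exact (mul_le_of_le_one_left (rpow_nonneg (abs_nonneg _) _) htwo).trans hlower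
  · linarith
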